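/- arXiv:2208.09634 — 3 statements merged into one kernel-verified Lean document; each statement's English description precedes it below -/
import Mathlib

section
/- Let n ≥ 1, let σ be invertible mod n, and let a, b ∈ ℤ_n. Define (P_{σ,a,b} x)_i = x_{σ(i−a)} e^{−2πi σ b i / n} and π_{σ,b}(i) = σ(i−b) mod n. Then for all i, the Fourier transform satisfies (P_{σ,a,b} x)^∧_{π_{σ,b}(i)} = x̂_i e^{−2πi σ a i / n}. -/
lemma ZMod.exp_neg_two_pi_I_val_div_eq_stdAddChar_inv {n : ℕ} [NeZero n] (m : ZMod n) :
    Complex.exp (-(2 * Real.pi * Complex.I) * (m.val : ℂ) / n) = ZMod.stdAddChar⁻¹ m := by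
  rw [AddChar.inv_apply', ZMod.stdAddChar_apply, ZMod.toCircle_apply, ← Complex.exp_neg]
  ring_nf

/-- Substituting `j = σ⁻¹ k + a`, the two characters combine into
`ψ (σ i (σ⁻¹ k + a)) = ψ (i k) ψ (σ a i)`. -/
lemma AddChar.sum_permuted_modulated_eq {R M : Type*} [CommRing R] [Fintype R] [CommRing M]
    (ψ : AddChar R M) (σ : Rˣ) (a b i : R) (x : R → M) :
    ∑ j, ψ (σ * (i - b) * j) * (x (σ * (j - a)) * ψ (σ * b * j)) =
      (∑ j, ψ (i * j) * x j) * ψ (σ * a * i) := by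
  rw [Finset.sum_mul]
  refine (Fintype.sum_equiv ((Units.mulLeft σ⁻¹).trans (Equiv.addRight a)) _ _ fun k => ?_).symm
  have hσ : (σ : R) * ↑σ⁻¹ = 1 := σ.mul_inv
  simp only [Equiv.trans_apply, Units.mulLeft_apply, Equiv.coe_addRight, add_sub_cancel_right,
    ← mul_assoc, hσ, one_mul]
  have hψ : ψ (σ * (i - b) * (↑σ⁻¹ * k + a)) * ψ (σ * b * (↑σ⁻¹ * k + a)) =
      ψ (i * k) * ψ (σ * a * i) := by
    rw [← map_add_eq_mul, ← map_add_eq_mul]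
    congr 1
    linear_combination i * k * hσ
  linear_combination (-x k) * hψ

/-- The pseudorandom spectrum permutation `(P_{σ,a,b} x)_i = x_{σ(i−a)} e^{−2πi σ b i / n}`
satisfies `(P_{σ,a,b} x)^∧_{π_{σ,b}(i)} = x̂_i e^{−2πi σ a i / n}` where
`π_{σ,b}(i) = σ(i−b)` and the Fourier transform is `ŷ_k = (1/√n) ∑_j e^{−2πi kj/n} y_j`. -/
theorem spectrum_permutation_property (n : ℕ) [NeZero n]
    (x : ZMod n → ℂ) (σ a b : ZMod n) (hσ : IsUnit σ)
    (F : (ZMod n → ℂ) → ZMod n → ℂ)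
    (hF : ∀ (y : ZMod n → ℂ) (k : ZMod n), F y k =
      (1 / (Real.sqrt n : ℂ)) * ∑ j : ZMod n,
        Complex.exp (-(2 * Real.pi * Complex.I) * ((k * j : ZMod n).val : ℂ) / n) * y j)
    (P : ZMod n → ℂ)
    (hP : ∀ i : ZMod n, P i =
      x (σ * (i - a)) *
        Complex.exp (-(2 * Real.pi * Complex.I) * ((σ * b * i : ZMod n).val : ℂ) / n)) :
    ∀ i : ZMod n, F P (σ * (i - b)) =
      F x i * Complex.exp (-(2 * Real.pi * Complex.I) * ((σ * a * i : ZMod n).val : ℂ) / n) := by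
  intro i
  obtain ⟨u, rfl⟩ := hσ
  simp only [hF, hP, ZMod.exp_neg_two_pi_I_val_div_eq_stdAddChar_inv]
  rw [AddChar.sum_permuted_modulated_eq]
  exact (mul_assoc _ _ _).symm
end

section
/- For a vector y ∈ ℂ^n and a set S ⊆ [n], if ‖y_T − w‖_2² ≤ (ε/20)(‖y_{S̄}‖_2² + c) where T ⊆ S and supp(w) ⊆ T, and S' = S \ T, then ‖(y − w)_{S̄'}‖_2² ≤ (1 + ε)‖y_{S̄}‖_2² + ε c. -/
/-- Restriction of a vector to a set of coordinates (zero outside the set). -/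
def restrict {n : ℕ} (y : Fin n → ℂ) (A : Finset (Fin n)) : Fin n → ℂ :=
  fun i => if i ∈ A then y i else 0

/-- Squared Euclidean norm of a vector in `ℂ^n`. -/
noncomputable def sqnorm {n : ℕ} (y : Fin n → ℂ) : ℝ := ∑ i, ‖y i‖ ^ 2

/-- If `‖y_T − w‖₂² ≤ (ε/20)(‖y_{S̄}‖₂² + c)` with `T ⊆ S`, `supp(w) ⊆ T`, and
`S' = S \ T`, then `‖(y − w)_{S̄'}‖₂² ≤ (1+ε)‖y_{S̄}‖₂² + ε c`. -/
theorem one_step_error_bound {n : ℕ} (y w : Fin n → ℂ) (S T S' : Finset (Fin n))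
    (hT : T ⊆ S) (hS' : S' = S \ T)
    (hsupp : ∀ i, w i ≠ 0 → i ∈ T)
    (ε c : ℝ) (hε : 0 < ε) (hε1 : ε < 1) (hc : 0 ≤ c)
    (hbound : sqnorm (restrict y T - w) ≤ (ε / 20) * (sqnorm (restrict y Sᶜ) + c)) :
    sqnorm (restrict (y - w) S'ᶜ) ≤ (1 + ε) * sqnorm (restrict y Sᶜ) + ε * c := by
  have hA : 0 ≤ sqnorm (restrict y Sᶜ) :=
    Finset.sum_nonneg fun i _ => by positivity
  have key : sqnorm (restrict (y - w) S'ᶜ) ≤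
      sqnorm (restrict y Sᶜ) + sqnorm (restrict y T - w) := by
    rw [sqnorm, sqnorm, sqnorm, ← Finset.sum_add_distrib]
    apply Finset.sum_le_sum
    intro i _
    simp only [restrict, Pi.sub_apply, hS', Finset.mem_compl, Finset.mem_sdiff]
    by_cases hiT : i ∈ T
    · have hiS : i ∈ S := hT hiT
      simp only [hiT, hiS, if_true, not_true_eq_false, and_false, not_false_eq_true]
      simp only [hiS, not_true_eq_false, if_false]
      simp
    · have hw : w i = 0 := by
        by_contra h; exact hiT (hsupp i h)
      by_cases hiS : i ∈ S
      · simp only [hiT, hiS, not_false_eq_true, and_true, not_true_eq_false,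
          if_false, if_true]
        simp [sub_zero]
      · simp only [hiT, hiS, false_and, not_false_eq_true, if_true, if_false, hw]
        simp
  have hle : (ε/20) * (sqnorm (restrict y Sᶜ) + c) ≤
      ε * sqnorm (restrict y Sᶜ) + ε * c := by nlinarith
  linarith
end

section
/- Let t and t' be distinct elements of ℤ_n with n a power of 2, let σ be uniform over odd residues mod n, b uniform over ℤ_n, and h_{σ,b}(i) = round(σ(i−b)·B/n mod n scaled). Then P[h_{σ,b}(t) = h_{σ,b}(t')] ≤ 4/B. -/
/-!
Write `n = 2 ^ m = c * B`. If `h_{σ,b}(t) = h_{σ,b}(t')`, the two rounded values differ by less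
than `1`, so `π_{σ,b}(t)` and `π_{σ,b}(t')` differ by less than `c`; hence `σ (t - t')` or
`σ (t' - t)` has representative `< c`. For `Δ ≠ 0` in `ℤ/n`, multiplication by `Δ` has fibres of
size at most `g = gcd(Δ, n)` and its nonzero values are positive multiples of `g`, so at most
`g * (c / g) ≤ c` elements `σ` give `0 < (σ Δ).val < c`. Odd `σ` are units, so `σ Δ ≠ 0`; thus at
most `2c` of the `n / 2` odd `σ` are bad, whatever `b` is, and the probability is at most
`2c / (n / 2) = 4 / B`.
-/

open Finset

theorem abs_sub_lt_one_of_round_eq {α : Type*} [Field α] [LinearOrder α] [IsStrictOrderedRing α]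
    [FloorRing α] {p q : α} (h : round p = round q) : |p - q| < 1 := by
  rw [round_eq, round_eq] at h
  simpa using Int.abs_sub_lt_one_of_floor_eq_floor h

namespace ZMod

section

variable {n : ℕ} [NeZero n]

theorem gcd_nsmul_eq_zero_of_mul_eq_zero {Δ z : ZMod n} (hz : z * Δ = 0) :
    Nat.gcd Δ.val n • z = 0 := by
  -- Bézout's identity read in `ℤ/n`, where `n = 0`.
  have hgcd : (Nat.gcd Δ.val n : ZMod n) = Δ * (Δ.val.gcdA n : ZMod n) := by
    have := congrArg (Int.cast : ℤ → ZMod n) (Nat.gcd_eq_gcd_ab Δ.val n)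
    push_cast [natCast_zmod_val, natCast_self] at this
    simpa using this
  rw [nsmul_eq_mul, hgcd]
  linear_combination (Δ.val.gcdA n : ZMod n) * hz

theorem card_filter_mul_eq_le (s : Finset (ZMod n)) (Δ y : ZMod n) :
    #{x ∈ s | x * Δ = y} ≤ Nat.gcd Δ.val n := by
  rcases eq_empty_or_nonempty {x ∈ s | x * Δ = y} with hempty | ⟨x₀, hx₀⟩
  · simp [hempty]
  calc #{x ∈ s | x * Δ = y} ≤ #{z : ZMod n | Nat.gcd Δ.val n • z = 0} := by
        refine card_le_card_of_injOn (· - x₀) (fun x hx => ?_) sub_left_injective.injOn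
        simp only [coe_filter, Set.mem_ofPred_eq, mem_filter] at hx hx₀
        simp only [coe_filter, mem_univ, true_and, Set.mem_ofPred_eq]
        exact gcd_nsmul_eq_zero_of_mul_eq_zero (by rw [sub_mul, hx.2, hx₀.2, sub_self])
    _ ≤ Nat.gcd Δ.val n :=
        IsAddCyclic.card_nsmul_eq_zero_le (Nat.gcd_pos_of_pos_right _ (NeZero.pos n))

theorem card_filter_val_mul_lt_le (Δ : ZMod n) (c : ℕ) :
    #{σ : ZMod n | σ * Δ ≠ 0 ∧ (σ * Δ).val < c} ≤ c := by
  set S : Finset (ZMod n) := {σ | σ * Δ ≠ 0 ∧ (σ * Δ).val < c}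
  set g := Nat.gcd Δ.val n
  have himage : #(S.image (· * Δ)) ≤ c / g := by
    rw [← Nat.Ioc_filter_dvd_card_eq_div]
    refine card_le_card_of_injOn val (fun w hw => ?_) (val_injective n).injOn
    obtain ⟨σ, hσ, rfl⟩ := mem_image.1 hw
    obtain ⟨hne, hlt⟩ := (mem_filter.1 hσ).2
    simp only [coe_filter, mem_Ioc, Set.mem_ofPred_eq]
    refine ⟨⟨val_pos.2 hne, hlt.le⟩, ?_⟩
    rw [val_mul, Nat.dvd_mod_iff (Nat.gcd_dvd_right _ _)]
    exact (Nat.gcd_dvd_left _ _).mul_left _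
  calc #S ≤ g * #(S.image (· * Δ)) :=
        card_le_mul_card_image S g fun y _ => card_filter_mul_eq_le S Δ y
    _ ≤ g * (c / g) := Nat.mul_le_mul_left g himage
    _ ≤ c := Nat.mul_div_le c g

theorem val_sub_lt_or_val_sub_lt {x y : ZMod n} {c : ℕ} (h : |(x.val : ℤ) - y.val| < c) :
    (x - y).val < c ∨ (y - x).val < c := by
  have := abs_lt.1 h
  rcases le_total y.val x.val with hle | hle
  · left; rw [val_sub hle]; omega
  · right; rw [val_sub hle]; omega

theorem val_sub_lt_or_val_sub_lt_of_round_eq {B c : ℕ} (hcB : c * B = n) {x y : ZMod n}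
    (h : round ((x.val : ℝ) * B / n) = round ((y.val : ℝ) * B / n)) :
    (x - y).val < c ∨ (y - x).val < c := by
  have hn : (n : ℝ) = c * B := by exact_mod_cast hcB.symm
  have hB : (0 : ℝ) < B := by
    have : B ≠ 0 := by rintro rfl; exact NeZero.ne n (by simpa using hcB.symm)
    positivity
  have hround := abs_sub_lt_one_of_round_eq h
  rw [← sub_div, ← sub_mul, abs_div, abs_mul, abs_of_pos hB, Nat.abs_cast,
    div_lt_one (Nat.cast_pos.2 (NeZero.pos n)), hn] at hround
  apply val_sub_lt_or_val_sub_lt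
  exact_mod_cast lt_of_mul_lt_mul_right hround hB.le

end

theorem isUnit_of_odd_val {m : ℕ} {σ : ZMod (2 ^ m)} (hσ : Odd σ.val) : IsUnit σ := by
  rw [← natCast_zmod_val σ, isUnit_iff_coprime]
  exact (Nat.coprime_two_right.2 hσ).pow_right m

theorem two_mul_card_filter_odd_val {m : ℕ} (hm : m ≠ 0) :
    2 * #{σ : ZMod (2 ^ m) | Odd σ.val} = 2 ^ m := by
  have hodd : ∀ a : ℕ, (2 ^ m).Coprime a ↔ Odd a := fun a => by
    rw [Nat.coprime_pow_left_iff (Nat.pos_of_ne_zero hm), Nat.coprime_two_left]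
  have htotient : #{σ : ZMod (2 ^ m) | Odd σ.val} = Nat.totient (2 ^ m) := by
    rw [Nat.totient_eq_card_coprime]
    refine card_nbij val (fun σ hσ => ?_) (val_injective _).injOn (fun a ha => ?_)
    · simp only [coe_filter, mem_univ, true_and, Set.mem_ofPred_eq, mem_range] at hσ ⊢
      exact ⟨val_lt σ, (hodd _).2 hσ⟩
    · simp only [coe_filter, mem_range, Set.mem_ofPred_eq] at ha
      refine ⟨a, ?_, val_cast_of_lt ha.1⟩
      simpa [val_cast_of_lt ha.1] using (hodd a).1 ha.2
  rw [htotient, Nat.totient_prime_pow Nat.prime_two (Nat.pos_of_ne_zero hm), ← mul_assoc,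
    ← pow_succ', Nat.sub_add_cancel (Nat.one_le_iff_ne_zero.2 hm), Nat.add_one_sub_one, mul_one]

theorem card_filter_odd_val_mul_lt_le {m : ℕ} {Δ : ZMod (2 ^ m)} (hΔ : Δ ≠ 0) (c : ℕ) :
    #{σ : ZMod (2 ^ m) | Odd σ.val ∧ ((σ * Δ).val < c ∨ (σ * -Δ).val < c)} ≤ 2 * c := by
  calc #{σ : ZMod (2 ^ m) | Odd σ.val ∧ ((σ * Δ).val < c ∨ (σ * -Δ).val < c)}
      ≤ #{σ : ZMod (2 ^ m) | σ * Δ ≠ 0 ∧ (σ * Δ).val < c} +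
          #{σ : ZMod (2 ^ m) | σ * -Δ ≠ 0 ∧ (σ * -Δ).val < c} := by
        refine (card_le_card fun σ hσ => ?_).trans (card_union_le _ _)
        simp only [mem_filter, mem_univ, true_and, mem_union] at hσ ⊢
        obtain ⟨hσodd, hlt | hlt⟩ := hσ
        · exact Or.inl ⟨by rwa [Ne, (isUnit_of_odd_val hσodd).mul_right_eq_zero], hlt⟩
        · exact Or.inr ⟨by rwa [Ne, (isUnit_of_odd_val hσodd).mul_right_eq_zero, neg_eq_zero],
            hlt⟩
    _ ≤ c + c := add_le_add (card_filter_val_mul_lt_le _ _) (card_filter_val_mul_lt_le _ _)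
    _ = 2 * c := (two_mul c).symm

end ZMod

/-- Pairwise collision bound underlying Claim 3.1 of HIKP12: for distinct `t, t' ∈ ℤ_n`
(`n` a power of 2, `B ∣ n`), over uniform odd `σ` and uniform `b`,
`P[h_{σ,b}(t) = h_{σ,b}(t')] ≤ 4/B` where `h_{σ,b}(i) = round(σ(i−b) mod n · B / n)`. -/
theorem pairwise_collision_probability (n B : ℕ) [NeZero n] (hn : ∃ m : ℕ, n = 2 ^ m)
    (hB : B ∣ n) (hBpos : 0 < B)
    (π : ZMod n → ZMod n → ZMod n → ℕ)
    (hπ : ∀ σ b i, π σ b i = (σ * (i - b)).val)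
    (h : ZMod n → ZMod n → ZMod n → ℤ)
    (hh : ∀ σ b i, h σ b i = round ((π σ b i : ℝ) * B / n))
    (t t' : ZMod n) (htt' : t ≠ t') :
    ((Finset.univ.filter (fun p : ZMod n × ZMod n =>
        Odd p.1.val ∧ h p.1 p.2 t = h p.1 p.2 t')).card : ℝ) /
      (((Finset.univ.filter (fun σ : ZMod n => Odd σ.val)).card : ℝ) * n)
    ≤ 4 / B := by
  obtain ⟨m, rfl⟩ := hn
  have hm : m ≠ 0 := by rintro rfl; exact htt' (Subsingleton.elim (α := ZMod 1) _ _)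
  obtain ⟨c, hc⟩ := hB
  have hcB : c * B = 2 ^ m := by rw [hc, mul_comm]
  have hcollision :
      ({p : ZMod (2 ^ m) × ZMod (2 ^ m) | Odd p.1.val ∧ h p.1 p.2 t = h p.1 p.2 t'} : Finset _) ⊆
        ({σ | Odd σ.val ∧ ((σ * (t - t')).val < c ∨ (σ * -(t - t')).val < c)} : Finset _) ×ˢ
          univ := by
    rintro ⟨σ, b⟩ hp
    simp only [mem_filter, mem_univ, true_and] at hp
    refine mem_product.2 ⟨mem_filter.2 ⟨mem_univ σ, hp.1, ?_⟩, mem_univ b⟩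
    rw [hh, hh, hπ, hπ] at hp
    convert ZMod.val_sub_lt_or_val_sub_lt_of_round_eq hcB hp.2 using 3 <;> ring
  have hP : (#{p : ZMod (2 ^ m) × ZMod (2 ^ m) | Odd p.1.val ∧ h p.1 p.2 t = h p.1 p.2 t'} : ℝ)
      ≤ 2 * c * 2 ^ m := by
    have hcard := (card_le_card hcollision).trans_eq (card_product _ _)
    rw [card_univ, ZMod.card] at hcard
    exact_mod_cast hcard.trans
      (Nat.mul_le_mul_right _ (ZMod.card_filter_odd_val_mul_lt_le (sub_ne_zero.2 htt') c))
  have hO : (#{σ : ZMod (2 ^ m) | Odd σ.val} : ℝ) = 2 ^ m / 2 := by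
    rw [eq_div_iff two_ne_zero, mul_comm]
    exact_mod_cast ZMod.two_mul_card_filter_odd_val hm
  have hcB' : (c : ℝ) * B = 2 ^ m := by exact_mod_cast hcB
  push_cast
  rw [hO, div_le_div_iff₀ (by positivity) (by exact_mod_cast hBpos)]
  calc _ ≤ 2 * c * 2 ^ m * (B : ℝ) := mul_le_mul_of_nonneg_right hP (Nat.cast_nonneg B)
    _ = 4 * (2 ^ m / 2 * 2 ^ m) := by rw [mul_right_comm, mul_assoc 2, hcB']; ring
end
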